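/- arXiv:math/0305105 — 3 statements merged into one kernel-verified Lean document; each statement's English description precedes it below -/
import Mathlib

section
/- Let B be a C*-subalgebra of the algebra B(H) of bounded linear operators on a Hilbert space H. If P₁ and P₂ are two orthogonal projections in the commutant B′ of B such that the restrictions of B to H₁ = P₁(H) and to H₂ = P₂(H) are both irreducible representations of B, and these two restricted representations are not unitarily equivalent (are distinct), then H₁ is orthogonal to H₂. -/
/-!
If `P₂` does not vanish on `H₁`, then `J = P₂ P₁` intertwines the two subrepresentations and
`J⋆J = P₁ P₂ P₁` is a self-adjoint operator on `H₁` commuting with `B`. By Schur's lemma it is a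
scalar `r > 0`: otherwise two disjoint spectral cut-offs `f(J⋆J)`, `g(J⋆J)` would be nonzero
elements of the commutant with product zero, and the closed range of `g(J⋆J)`, a nonzero invariant
subspace of `H₁`, would lie in the kernel of `f(J⋆J)`. Hence `r^{-1/2} J` maps `H₁` isometrically
onto a nonzero closed invariant subspace of `H₂`, which by irreducibility is all of `H₂`: the two
subrepresentations would be unitarily equivalent.
-/

open ContinuousLinearMap

variable {𝕜 E : Type*}

section Irreducible

variable [NontriviallyNormedField 𝕜] [NormedAddCommGroup E] [NormedSpace 𝕜 E]

def IsIrreducibleSubspace (Γ : Set (E →L[𝕜] E)) (K : Submodule 𝕜 E) : Prop :=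
  ∀ L : Submodule 𝕜 E, IsClosed (L : Set E) → L ≤ K → (∀ T ∈ Γ, ∀ x ∈ L, T x ∈ L) →
    L = ⊥ ∨ L = K

theorem Commute.restrict {S T : E →L[𝕜] E} (h : Commute S T) {K : Submodule 𝕜 E}
    (hS : ∀ x ∈ K, S x ∈ K) (hT : ∀ x ∈ K, T x ∈ K) : Commute (S.restrict hS) (T.restrict hT) :=
  ext fun x => Subtype.ext congr($(h.eq) x)

variable {Γ : Set (E →L[𝕜] E)}

theorem IsIrreducibleSubspace.eq_zero_of_mul_eq_zero (hΓ : IsIrreducibleSubspace Γ ⊤)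
    {A C : E →L[𝕜] E} (hC : ∀ T ∈ Γ, Commute T C) (hC0 : C ≠ 0) (hAC : A * C = 0) : A = 0 := by
  set K := C.range.topologicalClosure
  have hKΓ : ∀ T ∈ Γ, ∀ x ∈ K, T x ∈ K := fun T hT => by
    have hrange : C.range ≤ K.comap (T : E →ₗ[𝕜] E) := by
      rintro _ ⟨y, rfl⟩
      exact C.range.le_topologicalClosure ⟨T y, congr($((hC T hT).eq) y).symm⟩
    exact Submodule.topologicalClosure_minimal _ hrange
      (C.range.isClosed_topologicalClosure.preimage T.continuous)
  have hK : K ≠ ⊥ := fun hK => hC0 <| ext fun y => by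
    have hy : C y ∈ K := C.range.le_topologicalClosure ⟨y, rfl⟩
    rw [hK] at hy
    simpa using hy
  have hKtop := (hΓ K C.range.isClosed_topologicalClosure le_top hKΓ).resolve_left hK
  have hKA : K ≤ A.ker := by
    refine Submodule.topologicalClosure_minimal _ ?_ (isClosed_ker A)
    rintro _ ⟨y, rfl⟩
    exact congr($hAC y)
  exact ext fun y => hKA (hKtop ▸ Submodule.mem_top)

theorem IsIrreducibleSubspace.restrict {K : Submodule 𝕜 E} (hΓ : IsIrreducibleSubspace Γ K)
    (hK : IsClosed (K : Set E)) (hΓK : ∀ T ∈ Γ, ∀ x ∈ K, T x ∈ K) :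
    IsIrreducibleSubspace (Set.range fun T : Γ => (T : E →L[𝕜] E).restrict (hΓK T T.2)) ⊤ := by
  intro L hL _ hLΓ
  have hclosed : IsClosed (L.map K.subtype : Set E) := by
    rw [Submodule.map_coe]
    exact hK.isClosedEmbedding_subtypeVal.isClosedMap _ hL
  have hinv : ∀ T ∈ Γ, ∀ x ∈ L.map K.subtype, T x ∈ L.map K.subtype := by
    rintro T hT _ ⟨y, hy, rfl⟩
    exact ⟨_, hLΓ _ ⟨⟨T, hT⟩, rfl⟩ y hy, rfl⟩
  have hinj := Submodule.map_injective_of_injective K.injective_subtype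
  rcases hΓ _ hclosed (Submodule.map_subtype_le K L) hinv with h | h
  · exact .inl (hinj (by rw [h, Submodule.map_bot]))
  · exact .inr (hinj (by rw [h, Submodule.map_subtype_top]))

end Irreducible

section CFC

variable {R A : Type*} {p : A → Prop} [Field R] [StarRing R] [MetricSpace R]
  [IsTopologicalSemiring R] [ContinuousStar R] [TopologicalSpace A] [Ring A] [StarRing A]
  [Algebra R A] [ContinuousFunctionalCalculus R A p]

theorem cfc_ne_zero_of_apply_ne_zero {f : R → R} {a : A} {x : R} (hx : x ∈ spectrum R a)
    (hfx : f x ≠ 0) (hf : ContinuousOn f (spectrum R a) := by cfc_cont_tac)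
    (ha : p a := by cfc_tac) : cfc f a ≠ 0 := fun h =>
  hfx (eqOn_of_cfc_eq_cfc (g := 0) (h.trans (cfc_zero R a).symm) hf continuousOn_const ha hx)

end CFC

section InnerProductSpace

variable [RCLike 𝕜] [NormedAddCommGroup E] [InnerProductSpace 𝕜 E] [CompleteSpace E]

theorem IsSelfAdjoint.restrict {S : E →L[𝕜] E} (hS : IsSelfAdjoint S) {K : Submodule 𝕜 E}
    [CompleteSpace K] (hSK : ∀ x ∈ K, S x ∈ K) : IsSelfAdjoint (S.restrict hSK) :=
  isSelfAdjoint_iff_isSymmetric.2 ((isSelfAdjoint_iff_isSymmetric.1 hS).restrict_invariant hSK)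

theorem norm_apply_eq_sqrt_mul_norm {J : E →L[𝕜] E} {x : E} {r : ℝ}
    (hx : (star J * J) x = (r : 𝕜) • x) : ‖J x‖ = √r * ‖x‖ := by
  have h : inner 𝕜 (J x) (J x) = (r : 𝕜) * inner 𝕜 x x := by
    rw [← inner_smul_right, ← hx]
    exact (adjoint_inner_right J x (J x)).symm
  have hsq : ‖J x‖ ^ 2 = r * ‖x‖ ^ 2 := by
    rw [← inner_self_eq_norm_sq (𝕜 := 𝕜), ← inner_self_eq_norm_sq (𝕜 := 𝕜), h,
      RCLike.re_ofReal_mul]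
  rw [← Real.sqrt_sq (norm_nonneg (J x)), hsq, Real.sqrt_mul' _ (sq_nonneg _),
    Real.sqrt_sq (norm_nonneg _)]

theorem IsIrreducibleSubspace.exists_linearIsometryEquiv {Γ : Set (E →L[𝕜] E)}
    {K₁ K₂ : Submodule 𝕜 E} (hK₂ : IsIrreducibleSubspace Γ K₂) (hK₁ : IsClosed (K₁ : Set E))
    (hΓK₁ : ∀ T ∈ Γ, ∀ x ∈ K₁, T x ∈ K₁) {J : E →L[𝕜] E} (hJΓ : ∀ T ∈ Γ, Commute T J)
    (hJK : ∀ x ∈ K₁, J x ∈ K₂) {r : ℝ} (hr : ∀ x ∈ K₁, (star J * J) x = (r : 𝕜) • x)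
    (hJ : ∃ x ∈ K₁, J x ≠ 0) :
    ∃ U : K₁ ≃ₗᵢ[𝕜] K₂, ∀ T (hT : T ∈ Γ) (x : K₁), (U ⟨T x, hΓK₁ T hT x x.2⟩ : E) = T (U x) := by
  have := hK₁.completeSpace_coe
  have hnorm (x : E) (hx : x ∈ K₁) := norm_apply_eq_sqrt_mul_norm (hr x hx)
  obtain ⟨x₀, hx₀, hJx₀⟩ := hJ
  have hc : √r ≠ 0 := fun h => hJx₀ (norm_eq_zero.1 (by rw [hnorm x₀ hx₀, h, zero_mul]))
  let V : K₁ →ₗᵢ[𝕜] E :=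
    { toLinearMap := ((√r : 𝕜)⁻¹ • J ∘L K₁.subtypeL : K₁ →L[𝕜] E)
      norm_map' := fun x => by
        change ‖(√r : 𝕜)⁻¹ • J x‖ = ‖x‖
        rw [norm_smul, norm_inv, RCLike.norm_ofReal, abs_of_nonneg (Real.sqrt_nonneg r),
          hnorm x x.2, inv_mul_cancel_left₀ hc, Submodule.coe_norm] }
  have hVΓ (T : E →L[𝕜] E) (hT : T ∈ Γ) (x : K₁) : V ⟨T x, hΓK₁ T hT x x.2⟩ = T (V x) := by
    change (√r : 𝕜)⁻¹ • J (T x) = T ((√r : 𝕜)⁻¹ • J x)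
    rw [map_smul]
    exact congrArg _ congr($((hJΓ T hT).eq) x).symm
  have hrange : LinearMap.range V.toLinearMap = K₂ := by
    refine (hK₂ _ ?_ ?_ ?_).resolve_left fun h => hJx₀ ?_
    · exact V.isometry.isClosedEmbedding.isClosed_range
    · rintro _ ⟨x, rfl⟩
      exact K₂.smul_mem _ (hJK x x.2)
    · rintro T hT _ ⟨x, rfl⟩
      exact ⟨_, hVΓ T hT x⟩
    · have hV : V ⟨x₀, hx₀⟩ = 0 := (Submodule.eq_bot_iff _).1 h _ ⟨_, rfl⟩
      rw [show x₀ = 0 from congrArg Subtype.val ((map_eq_zero_iff V V.injective).1 hV), map_zero]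
  exact ⟨V.equivRange.trans (.ofEq _ _ hrange), hVΓ⟩

end InnerProductSpace

section Schur

variable [NormedAddCommGroup E] [InnerProductSpace ℂ E] [CompleteSpace E] {Γ : Set (E →L[ℂ] E)}

theorem IsIrreducibleSubspace.exists_eq_algebraMap_of_commute
    (hΓ : IsIrreducibleSubspace Γ ⊤) {S : E →L[ℂ] E}
    (hS : IsSelfAdjoint S) (hSΓ : ∀ T ∈ Γ, Commute T S) : ∃ r : ℝ, S = algebraMap ℝ _ r := by
  have hspec : (spectrum ℝ S).Subsingleton := by
    suffices h : ∀ r₁ ∈ spectrum ℝ S, ∀ r₂ ∈ spectrum ℝ S, ¬ r₁ < r₂ from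
      fun r₁ h₁ r₂ h₂ => le_antisymm (not_lt.1 (h r₂ h₂ r₁ h₁)) (not_lt.1 (h r₁ h₁ r₂ h₂))
    intro r₁ h₁ r₂ h₂ hlt
    -- cut the spectrum at the midpoint `m`; the two halves give orthogonal nonzero parts of `S`
    set m := (r₁ + r₂) / 2
    have hfg : cfc (fun x => max (m - x) 0) S * cfc (fun x => max (x - m) 0) S = 0 := by
      rw [← cfc_mul .., ← cfc_zero (R := ℝ) S]
      refine cfc_congr fun x _ => ?_
      rcases le_total x m with h | h <;> simp [h]
    have hg : cfc (fun x => max (x - m) 0) S ≠ 0 :=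
      cfc_ne_zero_of_apply_ne_zero h₂ (by simp [m]; linarith)
    have hf : cfc (fun x => max (m - x) 0) S ≠ 0 :=
      cfc_ne_zero_of_apply_ne_zero h₁ (by simp [m]; linarith)
    exact hf (hΓ.eq_zero_of_mul_eq_zero (fun T hT => ((hSΓ T hT).symm.cfc_real _).symm) hg hfg)
  rcases subsingleton_or_nontrivial E with hE | hE
  · exact ⟨0, Subsingleton.elim _ _⟩
  obtain ⟨r, hr⟩ := ContinuousFunctionalCalculus.spectrum_nonempty (R := ℝ) S hS
  exact ⟨r, CFC.eq_algebraMap_of_spectrum_subset_singleton S r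
    (hspec.eq_singleton_of_mem hr).subset⟩

theorem IsIrreducibleSubspace.exists_eq_smul_of_commute {K : Submodule ℂ E}
    (hΓ : IsIrreducibleSubspace Γ K) (hK : IsClosed (K : Set E))
    (hΓK : ∀ T ∈ Γ, ∀ x ∈ K, T x ∈ K) {S : E →L[ℂ] E} (hS : IsSelfAdjoint S)
    (hSΓ : ∀ T ∈ Γ, Commute T S) (hSK : ∀ x ∈ K, S x ∈ K) :
    ∃ r : ℝ, ∀ x ∈ K, S x = (r : ℂ) • x := by
  have := hK.completeSpace_coe
  obtain ⟨r, hr⟩ := (hΓ.restrict hK hΓK).exists_eq_algebraMap_of_commute (hS.restrict hSK)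
    (by rintro _ ⟨T, rfl⟩; exact (hSΓ T T.2).restrict _ _)
  exact ⟨r, fun x hx => by simpa using congr(($hr ⟨x, hx⟩ : E))⟩

end Schur

open ContinuousLinearMap in
theorem orthogonal_of_distinct_irreducible_subreps_general
    {H : Type} [NormedAddCommGroup H] [InnerProductSpace ℂ H] [CompleteSpace H]
    (B : StarSubalgebra ℂ (H →L[ℂ] H))
    (P₁ P₂ : H →L[ℂ] H)
    (hP₁idem : IsIdempotentElem P₁) (hP₁sa : adjoint P₁ = P₁)
    (hP₂idem : IsIdempotentElem P₂) (hP₂sa : adjoint P₂ = P₂)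
    (hP₁comm : ∀ b ∈ B, P₁ * b = b * P₁) (hP₂comm : ∀ b ∈ B, P₂ * b = b * P₂)
    (H₁ H₂ : Submodule ℂ H)
    (hH₁ : H₁ = LinearMap.range (P₁ : H →ₗ[ℂ] H)) (hH₂ : H₂ = LinearMap.range (P₂ : H →ₗ[ℂ] H))
    (hinv₁ : ∀ b ∈ B, ∀ x ∈ H₁, b x ∈ H₁)
    (hirr₁ : ∀ K : Submodule ℂ H, IsClosed (K : Set H) → K ≤ H₁ →
      (∀ b ∈ B, ∀ x ∈ K, b x ∈ K) → K = ⊥ ∨ K = H₁)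
    (hirr₂ : ∀ K : Submodule ℂ H, IsClosed (K : Set H) → K ≤ H₂ →
      (∀ b ∈ B, ∀ x ∈ K, b x ∈ K) → K = ⊥ ∨ K = H₂)
    (hdistinct : ¬ ∃ U : H₁ ≃ₗᵢ[ℂ] H₂,
      ∀ (b : H →L[ℂ] H) (hb : b ∈ B) (x : H₁),
        (U ⟨b x, hinv₁ b hb x.1 x.2⟩ : H) = b (U x : H)) :
    ∀ x ∈ H₁, ∀ y ∈ H₂, @inner ℂ H _ x y = 0 := by
  have hB₁ : IsIrreducibleSubspace (B : Set (H →L[ℂ] H)) H₁ := hirr₁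
  have hB₂ : IsIrreducibleSubspace (B : Set (H →L[ℂ] H)) H₂ := hirr₂
  have hP₁ : IsSelfAdjoint P₁ := hP₁sa
  have hP₂ : IsSelfAdjoint P₂ := hP₂sa
  have hH₁closed : IsClosed (H₁ : Set H) := hH₁ ▸ hP₁idem.isClosed_range
  have hBP₁ (b) (hb : b ∈ B) : Commute b P₁ := (hP₁comm b hb).symm
  have hBP₂ (b) (hb : b ∈ B) : Commute b P₂ := (hP₂comm b hb).symm
  intro x hx y hy
  by_contra hxy
  have hP₁x : P₁ x = x :=
    (LinearMap.IsIdempotentElem.mem_range_iff hP₁idem.toLinearMap).1 (hH₁ ▸ hx)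
  have hP₂y : P₂ y = y :=
    (LinearMap.IsIdempotentElem.mem_range_iff hP₂idem.toLinearMap).1 (hH₂ ▸ hy)
  have hJx : (P₂ * P₁) x ≠ 0 := fun h => hxy <| by
    rw [← hP₂y, ← adjoint_inner_left, hP₂sa, ← hP₁x]
    exact h ▸ inner_zero_left _
  have hJJ : star (P₂ * P₁) * (P₂ * P₁) = P₁ * P₂ * P₁ := by
    rw [star_mul, hP₁.star_eq, hP₂.star_eq, mul_assoc, ← mul_assoc P₂, hP₂idem.eq, mul_assoc]
  obtain ⟨r, hr⟩ := hB₁.exists_eq_smul_of_commute hH₁closed hinv₁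
    (hJJ ▸ IsSelfAdjoint.star_mul_self _)
    (fun b hb => ((hBP₁ b hb).mul_right (hBP₂ b hb)).mul_right (hBP₁ b hb))
    (fun _ _ => hH₁ ▸ LinearMap.mem_range_self _ _)
  obtain ⟨U, hU⟩ := hB₂.exists_linearIsometryEquiv hH₁closed hinv₁
    (fun b hb => (hBP₂ b hb).mul_right (hBP₁ b hb)) (fun _ _ => hH₂ ▸ LinearMap.mem_range_self _ _)
    (hJJ ▸ hr) ⟨x, hx, hJx⟩
  exact hdistinct ⟨U, hU⟩

open ContinuousLinearMap in
/-- Lemma 1.4 (Lemma a): if two projections in the commutant of a C*-subalgebra `B ⊆ B(H)`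
cut out irreducible and mutually inequivalent subrepresentations of `B`, then their ranges
are orthogonal. -/
theorem orthogonal_of_distinct_irreducible_subreps
    {H : Type} [NormedAddCommGroup H] [InnerProductSpace ℂ H] [CompleteSpace H]
    (B : StarSubalgebra ℂ (H →L[ℂ] H)) (hBclosed : IsClosed (B : Set (H →L[ℂ] H)))
    (P₁ P₂ : H →L[ℂ] H)
    (hP₁idem : IsIdempotentElem P₁) (hP₁sa : adjoint P₁ = P₁)
    (hP₂idem : IsIdempotentElem P₂) (hP₂sa : adjoint P₂ = P₂)
    (hP₁comm : ∀ b ∈ B, P₁ * b = b * P₁) (hP₂comm : ∀ b ∈ B, P₂ * b = b * P₂)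
    (H₁ H₂ : Submodule ℂ H)
    (hH₁ : H₁ = LinearMap.range (P₁ : H →ₗ[ℂ] H)) (hH₂ : H₂ = LinearMap.range (P₂ : H →ₗ[ℂ] H))
    (hinv₁ : ∀ b ∈ B, ∀ x ∈ H₁, b x ∈ H₁) (hinv₂ : ∀ b ∈ B, ∀ x ∈ H₂, b x ∈ H₂)
    (hirr₁ : ∀ K : Submodule ℂ H, IsClosed (K : Set H) → K ≤ H₁ →
      (∀ b ∈ B, ∀ x ∈ K, b x ∈ K) → K = ⊥ ∨ K = H₁)
    (hirr₂ : ∀ K : Submodule ℂ H, IsClosed (K : Set H) → K ≤ H₂ →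
      (∀ b ∈ B, ∀ x ∈ K, b x ∈ K) → K = ⊥ ∨ K = H₂)
    (hdistinct : ¬ ∃ U : H₁ ≃ₗᵢ[ℂ] H₂,
      ∀ (b : H →L[ℂ] H) (hb : b ∈ B) (x : H₁),
        (U ⟨b x, hinv₁ b hb x.1 x.2⟩ : H) = b (U x : H)) :
    ∀ x ∈ H₁, ∀ y ∈ H₂, @inner ℂ H _ x y = 0 :=
  orthogonal_of_distinct_irreducible_subreps_general B P₁ P₂ hP₁idem hP₁sa hP₂idem hP₂sa hP₁comm
    hP₂comm H₁ H₂ hH₁ hH₂ hinv₁ hirr₁ hirr₂ hdistinct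
end

section
/- Let α be a partial action of a discrete group G on a C*-algebra A and let L = {a ∈ ℓ¹(G, A) : a(g) ∈ D_g for all g}, equipped with the convolution product (a * b)(g) = Σ_{h∈G} α_h[α_{h⁻¹}(a(h)) · b(h⁻¹g)] and involution a*(g) = α_g(a(g⁻¹)*). Then the involution is isometric and satisfies (a * b)* = b* * a*, so L is a Banach *-algebra. -/
noncomputable section

/-- A partial action of a discrete group `G` on a (C*-)algebra `A`: a family of closed
two-sided (star-closed) ideals `D g` together with *-isomorphisms `α g : D g⁻¹ ≃ D g`
satisfying `α g (D g⁻¹ ∩ D h) ⊆ D (g h)`, `α (h g) = α h ∘ α g` on the appropriate domain,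
`D 1 = A` and `α 1 = id`. -/
structure PartialAction (G : Type) [Group G] (A : Type) [NonUnitalNormedRing A]
    [StarRing A] [NormedSpace ℂ A] [IsScalarTower ℂ A A] [SMulCommClass ℂ A A]
    [StarModule ℂ A] where
  D : G → NonUnitalStarSubalgebra ℂ A
  closed : ∀ g, IsClosed (D g : Set A)
  idealL : ∀ g, ∀ a : A, ∀ d ∈ D g, a * d ∈ D g
  idealR : ∀ g, ∀ a : A, ∀ d ∈ D g, d * a ∈ D g
  α : ∀ g : G, ↥(D g⁻¹) ≃⋆ₐ[ℂ] ↥(D g)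
  D_one : D (1 : G) = ⊤
  α_one : ∀ d : ↥(D (1 : G)⁻¹), ((α 1 d : A)) = (d : A)
  mapsInto : ∀ g h : G, ∀ d : ↥(D g⁻¹), (d : A) ∈ D h → ((α g d : A)) ∈ D (g * h)
  comp : ∀ h g : G, ∀ d : ↥(D g⁻¹), ∀ hd : (d : A) ∈ D ((h * g)⁻¹),
    ∀ hd2 : ((α g d : A)) ∈ D h⁻¹,
    ((α (h * g) ⟨(d : A), hd⟩ : A)) = ((α h ⟨(α g d : A), hd2⟩ : A))

variable {G : Type} [Group G] {A : Type} [NonUnitalCStarAlgebra A]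
  [NormedSpace ℂ A] [IsScalarTower ℂ A A] [SMulCommClass ℂ A A] [StarModule ℂ A]

/-- The involution `a*(g) = α_g (a(g⁻¹)*)` on `L = {a ∈ ℓ¹(G,A) : a(g) ∈ D_g}`. -/
def LStar (θ : PartialAction G A) (a : G → A) (ha : ∀ g, a g ∈ θ.D g) : G → A :=
  fun g => (θ.α g ⟨star (a g⁻¹), star_mem (ha g⁻¹)⟩ : A)

lemma LStar_mem (θ : PartialAction G A) (a : G → A) (ha : ∀ g, a g ∈ θ.D g) (g : G) :
    LStar θ a ha g ∈ θ.D g := (θ.α g _).2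

/-- The convolution `(a * b)(g) = Σ_h α_h [α_{h⁻¹}(a(h)) b(h⁻¹ g)]` on `L`. -/
def LConv (θ : PartialAction G A) (a b : G → A) (ha : ∀ g, a g ∈ θ.D g) : G → A :=
  fun g => ∑' h : G,
    (θ.α h ⟨((θ.α h⁻¹ ⟨a h, by rw [inv_inv]; exact ha h⟩ : A)) * b (h⁻¹ * g),
      θ.idealR h⁻¹ (b (h⁻¹ * g)) _ (θ.α h⁻¹ ⟨a h, by rw [inv_inv]; exact ha h⟩).2⟩ : A)

/-!
Each `α g` is a *-isomorphism between closed ideals, which are C*-algebras, hence an isometry.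
So the involution is isometric after reindexing by `g ↦ g⁻¹`, and the `h`-th summand of
`(a * b)(g)` has norm at most `‖a h‖ * ‖b (h⁻¹ * g)‖`, which gives the ℓ¹ estimate after the change
of variables `(h, k) ↦ (h * k, h)`. As an isometry between complete spaces, `α g` commutes with
infinite sums, so `(a * b)*` can be computed termwise; using `α_g ∘ α_h = α_{gh}` and
`α_{k⁻¹} ∘ α_k = id`, the `h`-th summand of `(a * b)*(g)` is the `g * h`-th summand of
`(b* * a*)(g)`.
-/

section Convolution

variable {E : Type*} [SeminormedAddCommGroup E] {u v : G → ℝ}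

private def mulFstEquiv : G × G ≃ G × G where
  toFun q := (q.1 * q.2, q.1)
  invFun p := (p.2, p.2⁻¹ * p.1)
  left_inv q := by simp
  right_inv p := by simp

lemma summable_mul_comp_inv_mul (hu0 : 0 ≤ u) (hv0 : 0 ≤ v) (hu : Summable u)
    (hv : Summable v) : Summable fun p : G × G => u p.2 * v (p.2⁻¹ * p.1) := by
  rw [← (mulFstEquiv (G := G)).summable_iff]
  simpa [Function.comp_def, mulFstEquiv] using hu.mul_of_nonneg hv hu0 hv0

lemma tsum_mul_comp_inv_mul (hu0 : 0 ≤ u) (hv0 : 0 ≤ v) (hu : Summable u)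
    (hv : Summable v) :
    ∑' p : G × G, u p.2 * v (p.2⁻¹ * p.1) = (∑' g, u g) * ∑' g, v g := by
  rw [hu.tsum_mul_tsum hv (hu.mul_of_nonneg hv hu0 hv0),
    ← (mulFstEquiv (G := G)).tsum_eq]
  simp [mulFstEquiv]

lemma tsum_norm_tsum_le_of_convolution_bound {F : G → G → E} (hu0 : 0 ≤ u) (hv0 : 0 ≤ v)
    (hu : Summable u) (hv : Summable v) (hF : ∀ g h, ‖F g h‖ ≤ u h * v (h⁻¹ * g)) :
    ∑' g, ‖∑' h, F g h‖ ≤ (∑' g, u g) * ∑' g, v g := by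
  have huv := summable_mul_comp_inv_mul hu0 hv0 hu hv
  have hFg (g : G) : Summable fun h => ‖F g h‖ :=
    .of_nonneg_of_le (fun _ => norm_nonneg _) (hF g) (huv.prod_factor g)
  have hbound (g : G) : ‖∑' h, F g h‖ ≤ ∑' h, u h * v (h⁻¹ * g) :=
    (norm_tsum_le_tsum_norm (hFg g)).trans ((hFg g).tsum_le_tsum (hF g) (huv.prod_factor g))
  calc ∑' g, ‖∑' h, F g h‖
      ≤ ∑' g, ∑' h, u h * v (h⁻¹ * g) :=
        Summable.tsum_le_tsum hbound (.of_nonneg_of_le (fun _ => norm_nonneg _) hbound huv.prod)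
          huv.prod
    _ = (∑' g, u g) * ∑' g, v g := by
        rw [← huv.tsum_prod, tsum_mul_comp_inv_mul hu0 hv0 hu hv]

end Convolution

namespace PartialAction

variable (θ : PartialAction G A)

-- Mathlib's `NonUnitalStarSubalgebra.nonUnitalCStarAlgebra` does not apply here: the ideals are
-- taken for the separately assumed `NormedSpace ℂ A`, not the one inside `NonUnitalCStarAlgebra A`.
instance nonUnitalCStarAlgebra (g : G) : NonUnitalCStarAlgebra (θ.D g) where
  toCompleteSpace := (θ.closed g).completeSpace_coe
  norm_mul_self_le x := CStarRing.norm_mul_self_le (x : A)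

def act (g : G) (x : A) (hx : x ∈ θ.D g⁻¹) : A := θ.α g ⟨x, hx⟩

lemma act_mem (g : G) (x : A) (hx : x ∈ θ.D g⁻¹) : θ.act g x hx ∈ θ.D g := (θ.α g ⟨x, hx⟩).2

lemma act_mem_mul (h k : G) (x : A) (hx : x ∈ θ.D h⁻¹) (hxk : x ∈ θ.D k) :
    θ.act h x hx ∈ θ.D (h * k) :=
  θ.mapsInto h k ⟨x, hx⟩ hxk

lemma norm_act (g : G) (x : A) (hx : x ∈ θ.D g⁻¹) : ‖θ.act g x hx‖ = ‖x‖ :=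
  NonUnitalStarAlgHom.norm_map (θ.α g) (θ.α g).injective ⟨x, hx⟩

lemma act_congr {g g' : G} {x x' : A} (hg : g = g') (hx : x = x') {h : x ∈ θ.D g⁻¹}
    {h' : x' ∈ θ.D g'⁻¹} : θ.act g x h = θ.act g' x' h' := by
  subst hg hx; rfl

lemma act_star (g : G) (x : A) (hx : x ∈ θ.D g⁻¹) :
    θ.act g (star x) (star_mem hx) = star (θ.act g x hx) :=
  (congrArg Subtype.val (map_star (θ.α g) ⟨x, hx⟩) :)

lemma act_mul (g h : G) (x : A) (hx : x ∈ θ.D h⁻¹) (hgh : x ∈ θ.D (g * h)⁻¹)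
    (hx' : θ.act h x hx ∈ θ.D g⁻¹) :
    θ.act (g * h) x hgh = θ.act g (θ.act h x hx) hx' :=
  θ.comp g h ⟨x, hx⟩ hgh hx'

lemma act_inv_act (g : G) (x : A) (hx : x ∈ θ.D g⁻¹) (hx' : θ.act g x hx ∈ θ.D g⁻¹⁻¹) :
    θ.act g⁻¹ (θ.act g x hx) hx' = x := by
  have hx₁ : x ∈ θ.D (1 : G)⁻¹ := by simp [θ.D_one]
  rw [← θ.act_mul g⁻¹ g x hx (by simp [θ.D_one]) hx',
    θ.act_congr (inv_mul_cancel g) rfl (h' := hx₁)]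
  exact θ.α_one ⟨x, hx₁⟩

lemma coe_tsum {ι : Type*} (g : G) (f : ι → A) (hf : ∀ i, f i ∈ θ.D g) :
    ∑' i, f i = ((∑' i, ⟨f i, hf i⟩ : θ.D g) : A) :=
  ((θ.closed g).isClosedEmbedding_subtypeVal.map_tsum (g := (θ.D g).subtype)
    fun i => (⟨f i, hf i⟩ : θ.D g)).symm

lemma tsum_mem {ι : Type*} (g : G) (f : ι → A) (hf : ∀ i, f i ∈ θ.D g) :
    ∑' i, f i ∈ θ.D g := by
  rw [θ.coe_tsum g f hf]
  exact Subtype.prop _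

lemma act_tsum {ι : Type*} (g : G) (f : ι → A) (hf : ∀ i, f i ∈ θ.D g⁻¹)
    (hs : ∑' i, f i ∈ θ.D g⁻¹) :
    θ.act g (∑' i, f i) hs = ∑' i, θ.act g (f i) (hf i) := by
  have hemb : Topology.IsClosedEmbedding (Subtype.val ∘ θ.α g) :=
    (isometry_subtype_coe.comp
      (NonUnitalStarAlgHom.isometry (θ.α g) (θ.α g).injective)).isClosedEmbedding
  have hsub : (⟨∑' i, f i, hs⟩ : θ.D g⁻¹) = ∑' i, ⟨f i, hf i⟩ := Subtype.ext (θ.coe_tsum _ f hf)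
  rw [act, hsub]
  exact hemb.map_tsum (g := (NonUnitalStarSubalgebraClass.subtype (θ.D g)).comp
    (θ.α g : θ.D g⁻¹ →⋆ₙₐ[ℂ] θ.D g)) _

lemma mem_D_inv_inv {g : G} {x : A} (hx : x ∈ θ.D g) : x ∈ θ.D g⁻¹⁻¹ := by rwa [inv_inv]

variable (a b : G → A) (ha : ∀ g, a g ∈ θ.D g)

def convTerm (g h : G) : A :=
  θ.act h (θ.act h⁻¹ (a h) (θ.mem_D_inv_inv (ha h)) * b (h⁻¹ * g))
    (θ.idealR _ _ _ (θ.act_mem _ _ _))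

lemma LConv_eq_tsum_convTerm (g : G) : LConv θ a b ha g = ∑' h, θ.convTerm a b ha g h := rfl

lemma norm_convTerm_le (g h : G) : ‖θ.convTerm a b ha g h‖ ≤ ‖a h‖ * ‖b (h⁻¹ * g)‖ := by
  rw [convTerm, norm_act]
  exact (norm_mul_le _ _).trans_eq (by rw [norm_act])

lemma convTerm_mem (hb : ∀ g, b g ∈ θ.D g) (g h : G) : θ.convTerm a b ha g h ∈ θ.D g := by
  have hmem := θ.act_mem_mul h (h⁻¹ * g) _
    (θ.idealR _ _ _ (θ.act_mem h⁻¹ (a h) (θ.mem_D_inv_inv (ha h)))) (θ.idealL _ _ _ (hb _))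
  rwa [mul_inv_cancel_left] at hmem

lemma norm_LStar (g : G) : ‖LStar θ a ha g‖ = ‖a g⁻¹‖ := by
  rw [LStar, ← act, norm_act, norm_star]

lemma tsum_norm_LStar : ∑' g, ‖LStar θ a ha g‖ = ∑' g, ‖a g‖ := by
  simp_rw [θ.norm_LStar]
  exact (Equiv.inv G).tsum_eq fun g => ‖a g‖

lemma LConv_mem (hb : ∀ g, b g ∈ θ.D g) (g : G) : LConv θ a b ha g ∈ θ.D g :=
  θ.tsum_mem g _ (θ.convTerm_mem a b ha hb g)

lemma tsum_norm_LConv_le (sa : Summable fun g => ‖a g‖) (sb : Summable fun g => ‖b g‖) :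
    ∑' g, ‖LConv θ a b ha g‖ ≤ (∑' g, ‖a g‖) * ∑' g, ‖b g‖ :=
  tsum_norm_tsum_le_of_convolution_bound (fun _ => norm_nonneg _) (fun _ => norm_nonneg _) sa sb
    (θ.norm_convTerm_le a b ha)

lemma act_inv_LStar (g : G) :
    θ.act g⁻¹ (LStar θ a ha g) (θ.mem_D_inv_inv (LStar_mem θ a ha g)) = star (a g⁻¹) :=
  θ.act_inv_act g _ _ _

lemma LStar_inv (g : G) :
    LStar θ a ha g⁻¹ = star (θ.act g⁻¹ (a g) (θ.mem_D_inv_inv (ha g))) := by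
  rw [← θ.act_star]
  exact θ.act_congr rfl (by rw [inv_inv])

lemma act_star_convTerm (hb : ∀ g, b g ∈ θ.D g) (g h : G) :
    θ.act g (star (θ.convTerm a b ha g⁻¹ h)) (star_mem (θ.convTerm_mem a b ha hb g⁻¹ h)) =
      θ.convTerm (LStar θ b hb) (LStar θ a ha) (LStar_mem θ b hb) g (g * h) := by
  set x := θ.act h⁻¹ (a h) (θ.mem_D_inv_inv (ha h))
  have hw : star (x * b (h⁻¹ * g⁻¹)) ∈ θ.D (h⁻¹ * g⁻¹) := star_mem (θ.idealL _ _ _ (hb _))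
  have hw' : star (x * b (h⁻¹ * g⁻¹)) ∈ θ.D h⁻¹ := star_mem (θ.idealR _ _ _ (θ.act_mem _ _ _))
  have hstar : star (x * b (h⁻¹ * g⁻¹)) =
      θ.act (g * h)⁻¹ (LStar θ b hb (g * h)) (θ.mem_D_inv_inv (LStar_mem θ b hb (g * h))) *
        LStar θ a ha ((g * h)⁻¹ * g) := by
    rw [act_inv_LStar, show (g * h)⁻¹ * g = h⁻¹ by group, LStar_inv, star_mul, mul_inv_rev]
  calc θ.act g (star (θ.convTerm a b ha g⁻¹ h)) _
      = θ.act g (θ.act h (star (x * b (h⁻¹ * g⁻¹))) hw')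
          (by simpa using θ.act_mem_mul h _ _ hw' hw) :=
        θ.act_congr rfl (θ.act_star h _ _).symm
    _ = θ.act (g * h) (star (x * b (h⁻¹ * g⁻¹))) (by rwa [mul_inv_rev]) :=
        (θ.act_mul g h _ _ _ _).symm
    _ = _ := θ.act_congr rfl hstar

lemma LStar_LConv (hb : ∀ g, b g ∈ θ.D g) (hc : ∀ g, LConv θ a b ha g ∈ θ.D g) (g : G) :
    LStar θ (LConv θ a b ha) hc g =
      LConv θ (LStar θ b hb) (LStar θ a ha) (LStar_mem θ b hb) g := by
  have hmem (h : G) : star (θ.convTerm a b ha g⁻¹ h) ∈ θ.D g⁻¹ :=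
    star_mem (θ.convTerm_mem a b ha hb g⁻¹ h)
  calc LStar θ (LConv θ a b ha) hc g
      = θ.act g (∑' h, star (θ.convTerm a b ha g⁻¹ h)) (θ.tsum_mem _ _ hmem) :=
        θ.act_congr rfl (by rw [LConv_eq_tsum_convTerm, tsum_star])
    _ = ∑' h, θ.act g (star (θ.convTerm a b ha g⁻¹ h)) (hmem h) := θ.act_tsum _ _ hmem _
    _ = ∑' h, θ.convTerm (LStar θ b hb) (LStar θ a ha) (LStar_mem θ b hb) g (g * h) :=
        tsum_congr (θ.act_star_convTerm a b ha hb g)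
    _ = LConv θ (LStar θ b hb) (LStar θ a ha) (LStar_mem θ b hb) g :=
        (Equiv.mulLeft g).tsum_eq _

end PartialAction

/-- on `L = {a ∈ ℓ¹(G,A) : a(g) ∈ D_g}` with the convolution product and
involution `a*(g) = α_g(a(g⁻¹)*)`, the involution is isometric and anti-multiplicative,
the convolution stays in `L` and is ℓ¹-submultiplicative; so `L` is a Banach *-algebra. -/
theorem L_isBanachStarAlgebra (θ : PartialAction G A) (a b : G → A)
    (ha : ∀ g, a g ∈ θ.D g) (hb : ∀ g, b g ∈ θ.D g)
    (sa : Summable fun g => ‖a g‖) (sb : Summable fun g => ‖b g‖) :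
    (∑' g, ‖LStar θ a ha g‖) = (∑' g, ‖a g‖) ∧
    (∀ g, LConv θ a b ha g ∈ θ.D g) ∧
    (∑' g, ‖LConv θ a b ha g‖) ≤ (∑' g, ‖a g‖) * (∑' g, ‖b g‖) ∧
    (∀ hc : ∀ g, LConv θ a b ha g ∈ θ.D g, ∀ g : G,
      LStar θ (LConv θ a b ha) hc g
        = LConv θ (LStar θ b hb) (LStar θ a ha) (LStar_mem θ b hb) g) :=
  ⟨θ.tsum_norm_LStar a ha, θ.LConv_mem a b ha hb, θ.tsum_norm_LConv_le a b ha sa sb,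
    θ.LStar_LConv a b ha hb⟩
end
end

section
/- Let G be a discrete group acting on a topological space X by partial homeomorphisms t_g : X_{g⁻¹} → X_g between open subsets. The following are equivalent: (i) for every finite set {g₁,…,g_k} ⊆ G and every nonempty open U ⊆ X_{g₁⁻¹} ∩ … ∩ X_{g_k⁻¹} there is x ∈ U such that the points t_{g₁}(x), …, t_{g_k}(x) are pairwise distinct; (ii) for every finite set {g₁,…,g_n} ⊆ G with g_i ≠ e, the set ⋃_{i=1}^n Fix(g_i) has empty interior, where Fix(g) = {x ∈ X_{g⁻¹} : t_g(x) = x}. -/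
noncomputable section

/-- A partial action of a discrete group `G` on a topological space `X` by partial
homeomorphisms `t g : X_{g⁻¹} ≃ₜ X_g` between open subsets. -/
structure TopPartialAction (G : Type) [Group G] (X : Type) [TopologicalSpace X] where
  Xg : G → Set X
  isOpen : ∀ g, IsOpen (Xg g)
  t : ∀ g : G, ↥(Xg g⁻¹) ≃ₜ ↥(Xg g)
  Xg_one : Xg (1 : G) = Set.univ
  t_one : ∀ x : ↥(Xg (1 : G)⁻¹), ((t 1 x : X)) = (x : X)
  mapsInto : ∀ (g h : G) (x : ↥(Xg g⁻¹)), (x : X) ∈ Xg h → ((t g x : X)) ∈ Xg (g * h)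
  comp : ∀ (g h : G) (x : ↥(Xg h⁻¹)) (hx : (x : X) ∈ Xg (g * h)⁻¹)
    (hx2 : ((t h x : X)) ∈ Xg g⁻¹),
    ((t (g * h) ⟨(x : X), hx⟩ : X)) = ((t g ⟨(t h x : X), hx2⟩ : X))

/-- The fixed-point set `Fix(g) = {x ∈ X_{g⁻¹} : t_g(x) = x}`. -/
def TopPartialAction.Fix {G : Type} [Group G] {X : Type} [TopologicalSpace X]
    (θ : TopPartialAction G X) (g : G) : Set X :=
  {x : X | ∃ hx : x ∈ θ.Xg g⁻¹, ((θ.t g ⟨x, hx⟩ : X)) = x}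

/-! A coincidence `t_g x = t_{g'} x` with `g ≠ g'` puts `x` in `Fix (g'⁻¹ g)`, so (ii) gives (i)
directly. Conversely, (i) applied to `{1, g}` shows that `Fix g` has empty interior when `g ≠ 1`.
As `X` is Hausdorff, `Fix g` is closed in the open set `X_{g⁻¹}`, hence nowhere dense, and a
finite union of nowhere dense sets is nowhere dense. -/

open Set

lemma IsLocallyClosed.isNowhereDense_iff {X : Type*} [TopologicalSpace X] {s : Set X}
    (hs : IsLocallyClosed s) : IsNowhereDense s ↔ interior s = ∅ := by
  refine ⟨fun h => eq_empty_of_subset_empty (h ▸ interior_mono subset_closure), fun h => ?_⟩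
  obtain ⟨U, Z, hU, hZ, rfl⟩ := hs
  refine eq_empty_of_forall_notMem fun x hx => ?_
  obtain ⟨y, hyW, hys⟩ := mem_closure_iff.mp (interior_subset hx) _ isOpen_interior hx
  have : U ∩ interior (closure (U ∩ Z)) ⊆ interior (U ∩ Z) := by
    refine interior_maximal (fun z hz => ⟨hz.1, ?_⟩) (hU.inter isOpen_interior)
    exact closure_minimal inter_subset_right hZ (interior_subset hz.2)
  simpa [h] using this ⟨hys.1, hyW⟩

lemma IsNowhereDense.union {X : Type*} [TopologicalSpace X] {s t : Set X}
    (hs : IsNowhereDense s) (ht : IsNowhereDense t) : IsNowhereDense (s ∪ t) := by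
  rw [IsNowhereDense, closure_union, interior_union_isClosed_of_interior_empty isClosed_closure ht]
  exact hs

lemma IsNowhereDense.biUnion_finset {X ι : Type*} [TopologicalSpace X] {F : Finset ι}
    {f : ι → Set X} (hf : ∀ i ∈ F, IsNowhereDense (f i)) : IsNowhereDense (⋃ i ∈ F, f i) := by
  classical
  induction F using Finset.induction_on with
  | empty => simp
  | insert a F _ ih =>
    rw [Finset.set_biUnion_insert]
    exact (hf a (F.mem_insert_self a)).union (ih fun i hi => hf i (Finset.mem_insert_of_mem hi))

namespace TopPartialAction

variable {G : Type} [Group G] {X : Type} [TopologicalSpace X] (θ : TopPartialAction G X)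

def IsTopologicallyFree : Prop :=
  ∀ (F : Finset G) (U : Set X), IsOpen U → U.Nonempty →
    (∀ g ∈ F, U ⊆ θ.Xg g⁻¹) →
    ∃ x ∈ U, ∀ g ∈ F, ∀ g' ∈ F, g ≠ g' →
      ∀ (hg : x ∈ θ.Xg g⁻¹) (hg' : x ∈ θ.Xg g'⁻¹),
        ((θ.t g ⟨x, hg⟩ : X)) ≠ ((θ.t g' ⟨x, hg'⟩ : X))

lemma mem_Xg_one_inv (x : X) : x ∈ θ.Xg (1 : G)⁻¹ := by
  simp [θ.Xg_one]

lemma coe_t_congr {g g' : G} (h : g = g') {x : X} (hx : x ∈ θ.Xg g⁻¹) (hx' : x ∈ θ.Xg g'⁻¹) :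
    (θ.t g ⟨x, hx⟩ : X) = θ.t g' ⟨x, hx'⟩ := by
  subst h
  rfl

lemma coe_t_inv_of_coe_eq {g : G} (x : θ.Xg g⁻¹) (y : θ.Xg g⁻¹⁻¹) (hy : (y : X) = θ.t g x) :
    (θ.t g⁻¹ y : X) = x := by
  obtain ⟨y, hy'⟩ := y
  subst hy
  have hx : (x : X) ∈ θ.Xg (g⁻¹ * g)⁻¹ := by simp [θ.Xg_one]
  rw [← θ.comp g⁻¹ g x hx hy', θ.coe_t_congr (inv_mul_cancel g) hx (θ.mem_Xg_one_inv x)]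
  exact θ.t_one _

lemma mem_Fix_inv_mul_of_coe_t_eq {g g' : G} {x : X} (hg : x ∈ θ.Xg g⁻¹) (hg' : x ∈ θ.Xg g'⁻¹)
    (heq : (θ.t g ⟨x, hg⟩ : X) = θ.t g' ⟨x, hg'⟩) : x ∈ θ.Fix (g'⁻¹ * g) := by
  set y : X := (θ.t g ⟨x, hg⟩ : X)
  have hy : y ∈ θ.Xg g⁻¹⁻¹ := by simpa only [inv_inv] using (θ.t g ⟨x, hg⟩).2
  have hy' : y ∈ θ.Xg g'⁻¹⁻¹ := by simpa only [inv_inv, heq] using (θ.t g' ⟨x, hg'⟩).2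
  -- `x = t_{g⁻¹} y` lies in `X_{g⁻¹ g'}` because `y ∈ X_{g'}`
  have hx : x ∈ θ.Xg (g'⁻¹ * g)⁻¹ := by
    have := θ.mapsInto g⁻¹ g' ⟨y, hy⟩ (by simpa only [inv_inv] using hy')
    rwa [θ.coe_t_inv_of_coe_eq ⟨x, hg⟩ ⟨y, hy⟩ rfl, ← inv_inv g', ← mul_inv_rev] at this
  exact ⟨hx, (θ.comp g'⁻¹ g ⟨x, hg⟩ hx hy').trans (θ.coe_t_inv_of_coe_eq ⟨x, hg'⟩ ⟨y, hy'⟩ heq)⟩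

lemma isLocallyClosed_Fix [T2Space X] (g : G) : IsLocallyClosed (θ.Fix g) := by
  have hFix : θ.Fix g = Subtype.val '' {z : θ.Xg g⁻¹ | (θ.t g z : X) = z} := by
    ext x
    simp [Fix]
  rw [hFix]
  refine IsLocallyClosed.image ?_ Topology.IsInducing.subtypeVal ?_
  · exact (isClosed_eq (continuous_subtype_val.comp (θ.t g).continuous)
      continuous_subtype_val).isLocallyClosed
  · simpa using (θ.isOpen g⁻¹).isLocallyClosed

variable {θ}

lemma IsTopologicallyFree.interior_Fix_eq_empty (hθ : θ.IsTopologicallyFree) {g : G}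
    (hg : g ≠ 1) : interior (θ.Fix g) = ∅ := by
  classical
  by_contra hne
  have hsub : interior (θ.Fix g) ⊆ θ.Xg g⁻¹ := fun x hx => (interior_subset hx).1
  obtain ⟨x, hx, hdistinct⟩ := hθ {1, g} _ isOpen_interior (nonempty_iff_ne_empty.mpr hne)
    (by simp [hsub, θ.Xg_one])
  obtain ⟨hxg, hfix⟩ := interior_subset hx
  exact hdistinct 1 (by simp) g (by simp) hg.symm (θ.mem_Xg_one_inv x) hxg
    ((θ.t_one _).trans hfix.symm)

lemma IsTopologicallyFree.interior_biUnion_Fix_eq_empty [T2Space X] (hθ : θ.IsTopologicallyFree)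
    {F : Finset G} (hF : ∀ g ∈ F, g ≠ 1) : interior (⋃ g ∈ F, θ.Fix g) = ∅ :=
  eq_empty_of_subset_empty <| (interior_mono subset_closure).trans <| Eq.subset <|
    IsNowhereDense.biUnion_finset fun g hg =>
      (θ.isLocallyClosed_Fix g).isNowhereDense_iff.mpr (hθ.interior_Fix_eq_empty (hF g hg))

lemma isTopologicallyFree_of_interior_biUnion_Fix_eq_empty
    (h : ∀ F : Finset G, (∀ g ∈ F, g ≠ 1) → interior (⋃ g ∈ F, θ.Fix g) = ∅) :
    θ.IsTopologicallyFree := by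
  classical
  intro F U hU hUne _
  by_contra! hcoincide
  let H : Finset G := F.offDiag.image fun p => p.2⁻¹ * p.1
  have hH : ∀ h ∈ H, h ≠ 1 := by
    simp only [H, Finset.mem_image, Finset.mem_offDiag]
    rintro _ ⟨⟨g, g'⟩, ⟨-, -, hne⟩, rfl⟩ h1
    exact hne (inv_mul_eq_one.mp h1).symm
  have hUH : U ⊆ ⋃ h ∈ H, θ.Fix h := fun x hx => by
    obtain ⟨g, hgF, g', hg'F, hne, hg, hg', heq⟩ := hcoincide x hx
    have hgg' : g'⁻¹ * g ∈ H :=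
      Finset.mem_image.mpr ⟨(g, g'), Finset.mem_offDiag.mpr ⟨hgF, hg'F, hne⟩, rfl⟩
    exact mem_biUnion hgg' (θ.mem_Fix_inv_mul_of_coe_t_eq hg hg' heq)
  simpa [h H hH] using hU.subset_interior_iff.mpr hUH hUne.some_mem

end TopPartialAction

theorem topologicallyFree_iff_fixedPoints_empty_interior_general
    {G : Type} [Group G] {X : Type} [TopologicalSpace X] [T2Space X]
    (θ : TopPartialAction G X) :
    (∀ (F : Finset G) (U : Set X), IsOpen U → U.Nonempty →
        (∀ g ∈ F, U ⊆ θ.Xg g⁻¹) →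
        ∃ x ∈ U, ∀ g ∈ F, ∀ g' ∈ F, g ≠ g' →
          ∀ (hg : x ∈ θ.Xg g⁻¹) (hg' : x ∈ θ.Xg g'⁻¹),
            ((θ.t g ⟨x, hg⟩ : X)) ≠ ((θ.t g' ⟨x, hg'⟩ : X))) ↔
    (∀ F : Finset G, (∀ g ∈ F, g ≠ 1) → interior (⋃ g ∈ F, θ.Fix g) = ∅) :=
  ⟨fun hθ _ hF => TopPartialAction.IsTopologicallyFree.interior_biUnion_Fix_eq_empty hθ hF,
    TopPartialAction.isTopologicallyFree_of_interior_biUnion_Fix_eq_empty⟩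

/-- the two formulations of topological freedom are equivalent:
(i) for every finite `{g₁,…,g_k} ⊆ G` and nonempty open `U ⊆ ⋂ X_{gᵢ⁻¹}` there is `x ∈ U`
with the `t_{gᵢ}(x)` pairwise distinct; (ii) for every finite `{g₁,…,g_n} ⊆ G` with
`gᵢ ≠ e`, the union of the fixed-point sets `Fix(gᵢ)` has empty interior. -/
theorem topologicallyFree_iff_fixedPoints_empty_interior
    {G : Type} [Group G] {X : Type} [TopologicalSpace X] [T2Space X] [BaireSpace X]
    (θ : TopPartialAction G X) :
    (∀ (F : Finset G) (U : Set X), IsOpen U → U.Nonempty →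
        (∀ g ∈ F, U ⊆ θ.Xg g⁻¹) →
        ∃ x ∈ U, ∀ g ∈ F, ∀ g' ∈ F, g ≠ g' →
          ∀ (hg : x ∈ θ.Xg g⁻¹) (hg' : x ∈ θ.Xg g'⁻¹),
            ((θ.t g ⟨x, hg⟩ : X)) ≠ ((θ.t g' ⟨x, hg'⟩ : X))) ↔
    (∀ F : Finset G, (∀ g ∈ F, g ≠ 1) → interior (⋃ g ∈ F, θ.Fix g) = ∅) :=
  topologicallyFree_iff_fixedPoints_empty_interior_general θ
end
end
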